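/- arXiv:1709.05124 — 4 statements merged into one kernel-verified Lean document; each statement's English description precedes it below -/
import Mathlib

section
/- Let D ⊂ C^n be a domain, φ, h : D_unit → C^n holomorphic, and define ψ_z(λ) := (h(λ)•(z−φ(λ)) − h(0)•(z−φ(0)))/λ + λ·conj(h(0)•(z−φ(0))). If there exists a Euclidean ball B ⊂ C^n such that Re ψ_z(λ) ≤ 0 for all λ in the unit disc and all z ∈ B, then h belongs to H^1(D_unit, C^n). -/
/-!
Fix a coordinate `j` and `0 < t < r`. Moving `z` from `c` to `c + a eⱼ` changes `ψ_z(λ)` by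
`a D + ā λ conj(hⱼ(0))`, where `D = (hⱼ(λ) - hⱼ(0))/λ`. For `a = t` and `a = it` the real parts of
these changes are differences of two nonpositive numbers, which bounds `|Re D|` and `|Im D|`. Since
`hⱼ(λ) = hⱼ(0) + λ D`, this gives `‖hⱼ‖ ≤ Re g` on the disc, for `g` a holomorphic combination of
`ψ_c`, `ψ_{c+teⱼ}`, `ψ_{c+iteⱼ}` and a constant. The mean value property of `Re g` then bounds every
integral mean of `‖hⱼ‖` by `2π Re g(0)`.
-/

open Complex Metric

noncomputable section

/-- The bilinear dot product on `ℂⁿ`. -/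
def dotn {n : ℕ} (z w : Fin n → ℂ) : ℂ := ∑ j, z j * w j

/-- The function `ψ_z(λ) = (h(λ)•(z-φ(λ)) - h(0)•(z-φ(0)))/λ + λ conj(h(0)•(z-φ(0)))`,
with the removable singularity at `λ = 0` handled by `dslope`. -/
def psi {n : ℕ} (φ h : ℂ → Fin n → ℂ) (z : Fin n → ℂ) (l : ℂ) : ℂ :=
  dslope (fun w => dotn (h w) (z - φ w)) 0 l
    + l * (starRingEnd ℂ) (dotn (h 0) (z - φ 0))

/-- The point `e^{iθ}` on the unit circle. -/
def circlePt (θ : ℝ) : ℂ := Complex.exp (θ * Complex.I)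

/-- Membership in the classical Hardy space `H¹` of the unit disc (for a function holomorphic
on the disc): the integral means on circles of radius `r < 1` are uniformly bounded. -/
def HardyH1Bound (f : ℂ → ℂ) : Prop :=
  ∃ C : ℝ, ∀ r ∈ Set.Ico (0 : ℝ) 1,
    (∫ θ in (0 : ℝ)..(2 * Real.pi), ‖f ((r : ℂ) * circlePt θ)‖) ≤ C

open Real ComplexConjugate

lemma intervalIntegral_circlePt_eq_circleAverage (f : ℂ → ℝ) (ρ : ℝ) :
    ∫ θ in (0 : ℝ)..2 * π, f (ρ * circlePt θ) = 2 * π * circleAverage f 0 ρ := by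
  have hmap (θ : ℝ) : (ρ : ℂ) * circlePt θ = circleMap 0 ρ θ := by
    simp [circleMap, circlePt]
  simp only [hmap, circleAverage_def, smul_eq_mul, ← mul_assoc,
    mul_inv_cancel₀ two_pi_pos.ne', one_mul]

lemma DifferentiableOn.circleAverage_re {g : ℂ → ℂ} {c : ℂ} {R : ℝ}
    (hg : DifferentiableOn ℂ g (closedBall c |R|)) :
    circleAverage (fun z => (g z).re) c R = (g c).re := by
  have hint : CircleIntegrable g c R :=
    (hg.continuousOn.mono sphere_subset_closedBall).circleIntegrable'
  rw [← (hg.diffContOnCl_ball subset_rfl).circleAverage]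
  exact reCLM.circleAverage_comp_comm hint

lemma hardyH1Bound_of_norm_le_re {f g : ℂ → ℂ} (hf : ContinuousOn f (ball 0 1))
    (hg : DifferentiableOn ℂ g (ball 0 1)) (hfg : ∀ z ∈ ball (0 : ℂ) 1, ‖f z‖ ≤ (g z).re) :
    HardyH1Bound f := by
  refine ⟨2 * π * (g 0).re, fun ρ ⟨hρ₀, hρ₁⟩ => ?_⟩
  have hsub : closedBall (0 : ℂ) |ρ| ⊆ ball 0 1 :=
    closedBall_subset_ball (by rwa [abs_of_nonneg hρ₀])
  have hsphere : sphere (0 : ℂ) |ρ| ⊆ ball 0 1 := sphere_subset_closedBall.trans hsub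
  rw [intervalIntegral_circlePt_eq_circleAverage (fun z => ‖f z‖),
    ← (hg.mono hsub).circleAverage_re]
  gcongr with z hz
  · exact ((hf.mono hsphere).norm).circleIntegrable'
  · exact ((continuous_re.comp_continuousOn hg.continuousOn).mono hsphere).circleIntegrable'
  · exact hfg z (hsphere hz)

theorem DifferentiableAt.dotn {n : ℕ} {f g : ℂ → Fin n → ℂ} {x : ℂ}
    (hf : DifferentiableAt ℂ f x) (hg : DifferentiableAt ℂ g x) :
    DifferentiableAt ℂ (fun w => dotn (f w) (g w)) x := by
  unfold _root_.dotn
  rw [differentiableAt_pi] at hf hg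
  fun_prop

theorem DifferentiableOn.dotn {n : ℕ} {f g : ℂ → Fin n → ℂ} {s : Set ℂ}
    (hf : DifferentiableOn ℂ f s) (hg : DifferentiableOn ℂ g s) :
    DifferentiableOn ℂ (fun w => dotn (f w) (g w)) s := by
  unfold _root_.dotn
  rw [differentiableOn_pi] at hf hg
  fun_prop

lemma differentiableOn_psi {n : ℕ} {φ h : ℂ → Fin n → ℂ} {s : Set ℂ} (hs : s ∈ nhds 0)
    (hφ : DifferentiableOn ℂ φ s) (hh : DifferentiableOn ℂ h s) (z : Fin n → ℂ) :
    DifferentiableOn ℂ (psi φ h z) s := by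
  have hdot := hh.dotn ((differentiableOn_const z).sub hφ)
  exact ((Complex.differentiableOn_dslope hs).mpr hdot).add (by fun_prop)

lemma dslope_add {𝕜 E : Type*} [NontriviallyNormedField 𝕜] [NormedAddCommGroup E]
    [NormedSpace 𝕜 E] {f g : 𝕜 → E} {a : 𝕜} (hf : DifferentiableAt 𝕜 f a)
    (hg : DifferentiableAt 𝕜 g a) (b : 𝕜) :
    dslope (f + g) a b = dslope f a b + dslope g a b := by
  rcases eq_or_ne b a with rfl | hne
  · simp only [dslope_same, deriv_add hf hg]
  · simp only [dslope_of_ne _ hne, slope_def_module, Pi.add_apply, ← smul_add]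
    congr 1
    abel

lemma dotn_add_smul_single {n : ℕ} (v w : Fin n → ℂ) (a : ℂ) (j : Fin n) :
    dotn v (w + a • Pi.single j 1) = dotn v w + a * v j := by
  simp [dotn, mul_add, Finset.sum_add_distrib, Pi.single_apply, mul_comm]

lemma psi_add_smul_single {n : ℕ} {φ h : ℂ → Fin n → ℂ} (hφ : DifferentiableAt ℂ φ 0)
    (hh : DifferentiableAt ℂ h 0) (z : Fin n → ℂ) (a : ℂ) (j : Fin n) (l : ℂ) :
    psi φ h (z + a • Pi.single j 1) l
      = psi φ h z l + a * dslope (fun w => h w j) 0 l + l * conj (a * h 0 j) := by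
  have hdot : (fun w => dotn (h w) (z + a • Pi.single j 1 - φ w))
      = (fun w => dotn (h w) (z - φ w)) + (ContinuousLinearMap.mul ℂ ℂ a) ∘ (fun w => h w j) := by
    ext w
    simp [add_sub_right_comm, dotn_add_smul_single]
  have hhj : DifferentiableAt ℂ (fun w => h w j) 0 := differentiableAt_pi.mp hh j
  unfold psi
  rw [hdot, dslope_add (f := fun w => dotn (h w) (z - φ w))
      (hh.dotn ((differentiableAt_const z).sub hφ)) (by fun_prop),
    ContinuousLinearMap.dslope_comp _ _ _ _ fun _ => hhj, add_sub_right_comm,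
    dotn_add_smul_single]
  simp only [ContinuousLinearMap.mul_apply', map_add]
  ring

lemma norm_le_of_re_nonpos {p D u : ℂ} {t : ℝ} (ht : 0 < t) (hp : p.re ≤ 0)
    (h₁ : (p + t * (D + u)).re ≤ 0) (h₂ : (p + t * I * (D - u)).re ≤ 0) :
    ‖D‖ ≤ 2 * ‖u‖ - ((p + t * (D + u)) + (p + t * I * (D - u)) + 2 * p).re / t := by
  have e₁ : (p + t * (D + u)).re = p.re + t * (D + u).re := by simp
  have e₂ : (p + t * I * (D - u)).re = p.re - t * (D - u).im := by
    simp [sub_eq_add_neg]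
  -- `|x - y| ≤ -x - y` for `x, y ≤ 0`, applied to `Re ψ` at the shifted point and at `p`
  have hre : t * |(D + u).re| ≤ -(p + t * (D + u)).re - p.re :=
    calc t * |(D + u).re| = |t * (D + u).re| := by rw [abs_mul, abs_of_pos ht]
      _ ≤ _ := abs_le.mpr ⟨by linarith, by linarith⟩
  have him : t * |(D - u).im| ≤ -(p + t * I * (D - u)).re - p.re :=
    calc t * |(D - u).im| = |t * (D - u).im| := by rw [abs_mul, abs_of_pos ht]
      _ ≤ _ := abs_le.mpr ⟨by linarith, by linarith⟩
  have hD : ‖D‖ ≤ |(D + u).re| + |(D - u).im| + 2 * ‖u‖ :=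
    calc ‖D‖ ≤ |D.re| + |D.im| := norm_le_abs_re_add_abs_im D
      _ ≤ (|(D + u).re| + |u.re|) + (|(D - u).im| + |u.im|) := by
          gcongr
          · simpa using abs_sub (D + u).re u.re
          · simpa using abs_add_le (D - u).im u.im
      _ ≤ _ := by linarith [abs_re_le_norm u, abs_im_le_norm u]
  rw [le_sub_iff_add_le, ← le_sub_iff_add_le', div_le_iff₀ ht, add_re, add_re,
    show (2 * p).re = 2 * p.re by simp]
  linarith [mul_le_mul_of_nonneg_left hD ht.le]

lemma norm_le_re_psi {n : ℕ} {φ h : ℂ → Fin n → ℂ} (hφ : DifferentiableAt ℂ φ 0)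
    (hh : DifferentiableAt ℂ h 0) (c : Fin n → ℂ) (j : Fin n) {t : ℝ} (ht : 0 < t) {l : ℂ}
    (hl : ‖l‖ ≤ 1) (hc : (psi φ h c l).re ≤ 0)
    (h₁ : (psi φ h (c + (t : ℂ) • Pi.single j 1) l).re ≤ 0)
    (h₂ : (psi φ h (c + (t * I) • Pi.single j 1) l).re ≤ 0) :
    ‖h l j‖ ≤ 3 * ‖h 0 j‖ - (psi φ h (c + (t : ℂ) • Pi.single j 1) l
      + psi φ h (c + (t * I) • Pi.single j 1) l + 2 * psi φ h c l).re / t := by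
  set D := dslope (fun w => h w j) 0 l
  set u := l * conj (h 0 j)
  have e₁ : psi φ h (c + (t : ℂ) • Pi.single j 1) l = psi φ h c l + t * (D + u) := by
    rw [psi_add_smul_single hφ hh]
    simp only [map_mul, conj_ofReal, u]
    ring
  have e₂ : psi φ h (c + (t * I) • Pi.single j 1) l = psi φ h c l + t * I * (D - u) := by
    rw [psi_add_smul_single hφ hh]
    simp only [map_mul, conj_ofReal, conj_I, u]
    ring
  rw [e₁] at h₁ ⊢
  rw [e₂] at h₂ ⊢
  have hD := norm_le_of_re_nonpos ht hc h₁ h₂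
  have hu : ‖u‖ ≤ ‖h 0 j‖ := by
    simpa [u] using mul_le_of_le_one_left (norm_nonneg _) hl
  have hhl : h l j = h 0 j + l * D := by
    have := sub_smul_dslope (fun w => h w j) 0 l
    rw [sub_zero, smul_eq_mul] at this
    linear_combination -this
  calc ‖h l j‖ ≤ ‖h 0 j‖ + ‖l‖ * ‖D‖ := by rw [hhl, ← norm_mul]; exact norm_add_le _ _
    _ ≤ ‖h 0 j‖ + ‖D‖ := by gcongr; exact mul_le_of_le_one_left (norm_nonneg _) hl
    _ ≤ _ := by linarith

lemma sum_normSq_add_smul_single_sub {n : ℕ} (c : Fin n → ℂ) (a : ℂ) (j : Fin n) :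
    ∑ k, normSq ((c + a • Pi.single j 1 : Fin n → ℂ) k - c k) = normSq a := by
  simp [Pi.single_apply, apply_ite normSq]

/-- If `Re ψ_z(λ) ≤ 0` for all `λ ∈ 𝔻` and all `z` in some Euclidean ball
`B ⊂ ℂⁿ`, then `h ∈ H¹(𝔻, ℂⁿ)`, i.e. each component of `h` is of class `H¹`. -/
theorem h_in_H1_of_psi_nonpos {n : ℕ}
    (φ h : ℂ → Fin n → ℂ)
    (hφ : DifferentiableOn ℂ φ (ball (0 : ℂ) 1))
    (hh : DifferentiableOn ℂ h (ball (0 : ℂ) 1))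
    (c : Fin n → ℂ) (r : ℝ) (hr : 0 < r)
    (hneg : ∀ l ∈ ball (0 : ℂ) 1, ∀ z : Fin n → ℂ,
      (∑ j, Complex.normSq (z j - c j)) < r ^ 2 → (psi φ h z l).re ≤ 0) :
    ∀ j, HardyH1Bound (fun l => h l j) := by
  intro j
  have hshift : ∀ a : ℂ, ‖a‖ < r → ∀ l ∈ ball (0 : ℂ) 1,
      (psi φ h (c + a • Pi.single j 1) l).re ≤ 0 := fun a ha l hl =>
    hneg l hl _ <| by
      rwa [sum_normSq_add_smul_single_sub, normSq_eq_norm_sq, sq_lt_sq₀ (norm_nonneg a) hr.le]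
  obtain ⟨t, ht, htr⟩ : ∃ t : ℝ, 0 < t ∧ t < r := ⟨r / 2, by positivity, by linarith⟩
  have ht' : ‖(t : ℂ)‖ < r := by rwa [norm_real, Real.norm_of_nonneg ht.le]
  have htI : ‖(t : ℂ) * I‖ < r := by rwa [norm_mul, norm_I, mul_one]
  have h0 : ∀ l ∈ ball (0 : ℂ) 1, (psi φ h c l).re ≤ 0 := by
    simpa using hshift 0 (by simpa using hr)
  have hnhds : ball (0 : ℂ) 1 ∈ nhds 0 := ball_mem_nhds 0 one_pos
  refine hardyH1Bound_of_norm_le_re (g := fun l => 3 * ‖h 0 j‖ -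
      (psi φ h (c + (t : ℂ) • Pi.single j 1) l
        + psi φ h (c + (t * I) • Pi.single j 1) l + 2 * psi φ h c l) / t)
    (fun l hl => (differentiableWithinAt_pi.mp (hh l hl) j).continuousWithinAt) ?_ ?_
  · have := differentiableOn_psi hnhds hφ hh
    fun_prop
  · intro l hl
    convert norm_le_re_psi (hφ.differentiableAt hnhds) (hh.differentiableAt hnhds) c j ht
      (mem_ball_zero_iff.mp hl).le (h0 l hl) (hshift _ ht' l hl) (hshift _ htI l hl) using 1
    simp [div_ofReal_re]
end
end

section
/- Let D ⊂ R^{2n−1} be a domain (n > 1) and S_D := Π^{−1}(D) ⊂ C^n the associated semitube, where Π(z) = (Re z_1, Im z_1, …, Re z_{n−1}, Im z_{n−1}, Re z_n). Then S_D is linearly convex if and only if for every a = (a′, a_{2n−1}) ∈ R^{2n−1} ∖ D there exists an affine real subspace H ⊂ R^{2n−1} of real codimension 1 or 2 with a ∈ H, H ∩ D = ∅, of the form: if codim H = 2, H = {x : b•(x′−a′) = b̃•(x′−a′) = 0} with b ∈ R^{2n−2}, b ≠ 0; if codim H = 1, H = {x : x_{2n−1} = a_{2n−1} − b•(x′−a′)}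 with b ∈ R^{2n−2}; where b̃_j = −b_{j+1} for j odd and b̃_j = b_{j−1} for j even (j = 1,…,2n−2). -/
open Complex

noncomputable section

variable {m : ℕ}

/-- `ℂⁿ` with `n = m + 1`, modelled as `ℂ^{n-1} × ℂ`. -/
abbrev ECx (m : ℕ) := (Fin m → ℂ) × ℂ

/-- `ℝ^{2n-1}` with `n = m + 1`, modelled as `ℂ^{n-1} × ℝ` via the identification
`(x₁,…,x_{2n-1}) ↔ ((x₁+ix₂,…,x_{2n-3}+ix_{2n-2}), x_{2n-1})`. -/
abbrev BR (m : ℕ) := (Fin m → ℂ) × ℝ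

/-- The projection `Π : ℂⁿ → ℝ^{2n-1}`,
`Π(z) = (Re z₁, Im z₁, …, Re z_{n-1}, Im z_{n-1}, Re z_n)`. -/
def proj (z : ECx m) : BR m := (z.1, z.2.re)

/-- The semitube with base `B ⊂ ℝ^{2n-1}`. -/
def semitube (B : Set (BR m)) : Set (ECx m) := proj ⁻¹' B

/-- The bilinear dot product on `ℂⁿ = ℂ^{n-1} × ℂ`. -/
def dotE (z w : ECx m) : ℂ := ∑ j, z.1 j * w.1 j + z.2 * w.2

/-- A set `G ⊂ ℂⁿ` is linearly convex if its complement is a union of affine complex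
hyperplanes, i.e. every point of the complement lies on an affine complex hyperplane
disjoint from `G`. -/
def LinearlyConvex (G : Set (ECx m)) : Prop :=
  ∀ w : ECx m, w ∉ G → ∃ α : ECx m, α ≠ 0 ∧ ∀ z ∈ G, dotE α (z - w) ≠ 0

/-!
A complex hyperplane `L` misses `𝒮_D = Π⁻¹(D)` iff its shadow `Π(L)` misses `D`, and the
shadows of complex hyperplanes are exactly the subspaces `H` of the statement: the hyperplane
`α • (z - w) = 0` projects onto the codimension-2 subspace `α' • (x' - w') = 0` when `α_n = 0`,
and otherwise onto the graph `x_{2n-1} = Re w_n - Re ((α'/α_n) • (x' - w'))`, since over each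
point `x'` it contains exactly one point, whose last coordinate may have any imaginary part.
-/

def complexHyperplane (α w : ECx m) : Set (ECx m) := {z | dotE α (z - w) = 0}

theorem linearlyConvex_iff_disjoint {G : Set (ECx m)} :
    LinearlyConvex G ↔ ∀ w ∉ G, ∃ α ≠ 0, Disjoint (complexHyperplane α w) G := by
  simp only [LinearlyConvex, Set.disjoint_right, complexHyperplane, Set.mem_ofPred_eq]

theorem disjoint_semitube_iff {L : Set (ECx m)} {D : Set (BR m)} :
    Disjoint L (semitube D) ↔ Disjoint (proj '' L) D :=
  Set.disjoint_image_left.symm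

theorem dotE_sub_eq_zero_iff {α z w : ECx m} (hα : α.2 ≠ 0) :
    dotE α (z - w) = 0 ↔ z.2 = w.2 - ∑ j, α.1 j / α.2 * (z.1 j - w.1 j) := by
  simp only [dotE, Prod.fst_sub, Prod.snd_sub, Pi.sub_apply, div_mul_eq_mul_div,
    ← Finset.sum_div]
  constructor <;> intro h
  · field_simp
    linear_combination h
  · rw [h]
    field_simp
    ring

theorem proj_image_complexHyperplane_of_snd_eq_zero {α : ECx m} (hα : α.2 = 0) (w : ECx m) :
    proj '' complexHyperplane α w = {x | ∑ j, α.1 j * (x.1 j - w.1 j) = 0} := by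
  ext x
  simp only [complexHyperplane, dotE, hα, zero_mul, add_zero, Set.mem_image, Set.mem_ofPred_eq,
    Prod.fst_sub, Pi.sub_apply]
  constructor
  · rintro ⟨z, hz, rfl⟩
    exact hz
  · intro hx
    exact ⟨(x.1, x.2), hx, rfl⟩

theorem proj_image_complexHyperplane_of_snd_ne_zero {α : ECx m} (hα : α.2 ≠ 0) (w : ECx m) :
    proj '' complexHyperplane α w =
      {x | x.2 = w.2.re - (∑ j, α.1 j / α.2 * (x.1 j - w.1 j)).re} := by
  ext x
  simp only [complexHyperplane, Set.mem_image, Set.mem_ofPred_eq, dotE_sub_eq_zero_iff hα]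
  constructor
  · rintro ⟨z, hz, rfl⟩
    exact congrArg re hz |>.trans (sub_re _ _)
  · intro hx
    refine ⟨(x.1, w.2 - ∑ j, α.1 j / α.2 * (x.1 j - w.1 j)), rfl, ?_⟩
    exact Prod.ext rfl ((sub_re _ _).trans hx.symm)

/-- With `w_j = b_{2j-1} - i b_{2j}`, the real and imaginary parts of `w • (x' - a')` are
`b•(x'-a')` and `b̃•(x'-a')`. -/
theorem linearlyConvex_semitube_iff_general {m : ℕ} (D : Set (BR m)) :
    LinearlyConvex (semitube D) ↔
      ∀ a : BR m, a ∉ D →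
        (∃ w : Fin m → ℂ, w ≠ 0 ∧ ∀ x ∈ D, (∑ j, w j * (x.1 j - a.1 j)) ≠ 0) ∨
        (∃ w : Fin m → ℂ, ∀ x ∈ D, x.2 ≠ a.2 - (∑ j, w j * (x.1 j - a.1 j)).re) := by
  simp only [linearlyConvex_iff_disjoint, disjoint_semitube_iff]
  constructor
  · intro h a ha
    obtain ⟨α, hα, hdisj⟩ := h (a.1, (a.2 : ℂ)) ha
    by_cases hα₂ : α.2 = 0
    · rw [proj_image_complexHyperplane_of_snd_eq_zero hα₂, Set.disjoint_right] at hdisj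
      exact .inl ⟨α.1, fun h₁ => hα (Prod.ext h₁ hα₂), hdisj⟩
    · rw [proj_image_complexHyperplane_of_snd_ne_zero hα₂, Set.disjoint_right] at hdisj
      exact .inr ⟨fun j => α.1 j / α.2, hdisj⟩
  · intro h w hw
    rcases h (proj w) hw with ⟨v, hv, hdisj⟩ | ⟨v, hdisj⟩
    · refine ⟨(v, 0), by simp [hv], ?_⟩
      rw [proj_image_complexHyperplane_of_snd_eq_zero rfl, Set.disjoint_right]
      exact hdisj
    · refine ⟨(v, 1), by simp, ?_⟩
      rw [proj_image_complexHyperplane_of_snd_ne_zero one_ne_zero, Set.disjoint_right]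
      simp only [div_one]
      exact hdisj

/-- For a domain `D ⊂ ℝ^{2n-1}` (`n > 1`), the semitube `𝒮_D` is
linearly convex iff every point `a ∉ D` lies on an affine real subspace `H` of codimension 1
or 2, disjoint from `D`, of the special form described in the paper: for codimension 2,
`H = {x : b•(x'-a') = b̃•(x'-a') = 0}` with `b ≠ 0`, which under the identification
`w_j = b_{2j-1} - i b_{2j}` reads `{x : w • (x' - a') = 0}` (complex bilinear dot product);
for codimension 1, `H = {x : x_{2n-1} = a_{2n-1} - b•(x'-a')}`, which reads
`{x : x.2 = a.2 - Re (w • (x' - a'))}`. -/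
theorem linearlyConvex_semitube_iff {m : ℕ} (hm : 1 ≤ m) (D : Set (BR m))
    (hDopen : IsOpen D) (hDconn : IsConnected D) :
    LinearlyConvex (semitube D) ↔
      ∀ a : BR m, a ∉ D →
        (∃ w : Fin m → ℂ, w ≠ 0 ∧ ∀ x ∈ D, (∑ j, w j * (x.1 j - a.1 j)) ≠ 0) ∨
        (∃ w : Fin m → ℂ, ∀ x ∈ D, x.2 ≠ a.2 - (∑ j, w j * (x.1 j - a.1 j)).re) :=
  linearlyConvex_semitube_iff_general D
end
end

section
/- Let Ω ⊂ R^{2n−2} be a non-convex domain that is C-convex when regarded as a domain in C^{n−1} (identifying R^{2n−2} ≅ C^{n−1}), and let D := Ω × R ⊂ R^{2n−1}. Then the semitube S_D = Π^{−1}(D) ⊂ C^n is C-convex but not convex. -/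
open Complex

noncomputable section

variable {m : ℕ}

/-- A set `G ⊂ ℂⁿ = ℂ^{n-1} × ℂ` is `ℂ`-convex if its intersection with every affine complex
line is connected and simply connected (when non-empty). -/
def CConvex (G : Set (ECx m)) : Prop :=
  ∀ z v : ECx m, v ≠ 0 → ({t : ℂ | z + t • v ∈ G}.Nonempty →
    IsConnected {t : ℂ | z + t • v ∈ G} ∧ SimplyConnectedSpace {t : ℂ | z + t • v ∈ G})

/-- `ℂ`-convexity for a set in `ℂ^{n-1}`. -/
def CConvex' (G : Set (Fin m → ℂ)) : Prop :=
  ∀ z v : Fin m → ℂ, v ≠ 0 → ({t : ℂ | z + t • v ∈ G}.Nonempty →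
    IsConnected {t : ℂ | z + t • v ∈ G} ∧ SimplyConnectedSpace {t : ℂ | z + t • v ∈ G})

/-!
A complex line `z + ℂ v` meets `Ω × ℂ` in the slice `{t | z₁ + t v₁ ∈ Ω}`: for `v₁ ≠ 0` this is a
slice of `Ω` by a complex line, and for `v₁ = 0` it is empty or all of `ℂ`. Convexity of `Ω × ℂ`
would restrict to convexity of `Ω` along the linear embedding `w ↦ (w, 0)`.
-/

theorem semitube_setOf_fst_mem (Ω : Set (Fin m → ℂ)) :
    semitube {x : BR m | x.1 ∈ Ω} = Prod.fst ⁻¹' Ω :=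
  rfl

theorem isConnected_univ_and_simplyConnectedSpace_univ :
    IsConnected (Set.univ : Set ℂ) ∧ SimplyConnectedSpace (Set.univ : Set ℂ) :=
  have : ContractibleSpace (Set.univ : Set ℂ) :=
    (convex_univ (𝕜 := ℝ)).contractibleSpace Set.univ_nonempty
  ⟨isConnected_univ, inferInstance⟩

theorem CConvex'.cConvex_fst_preimage {Ω : Set (Fin m → ℂ)} (hΩ : CConvex' Ω) :
    CConvex (Prod.fst ⁻¹' Ω : Set (ECx m)) := by
  intro z v hv hne
  change {t : ℂ | z.1 + t • v.1 ∈ Ω}.Nonempty at hne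
  change IsConnected {t : ℂ | z.1 + t • v.1 ∈ Ω} ∧ SimplyConnectedSpace {t : ℂ | z.1 + t • v.1 ∈ Ω}
  by_cases hv₁ : v.1 = 0
  · obtain ⟨t₀, ht₀⟩ := hne
    have hslice : {t : ℂ | z.1 + t • v.1 ∈ Ω} = Set.univ :=
      Set.eq_univ_of_forall fun t => by simpa [hv₁] using ht₀
    rw [hslice]
    exact isConnected_univ_and_simplyConnectedSpace_univ
  · exact hΩ z.1 v.1 hv₁ hne

theorem Convex.of_fst_preimage {𝕜 E F : Type*} [Semiring 𝕜] [PartialOrder 𝕜] [AddCommMonoid E]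
    [Module 𝕜 E] [AddCommMonoid F] [Module 𝕜 F] {s : Set E}
    (hs : Convex 𝕜 (Prod.fst ⁻¹' s : Set (E × F))) : Convex 𝕜 s :=
  hs.linear_preimage (LinearMap.inl 𝕜 E F)

theorem cConvex_not_convex_semitube_general {m : ℕ} (Ω : Set (Fin m → ℂ))
    (hΩnotconv : ¬ Convex ℝ Ω) (hΩcc : CConvex' Ω) :
    CConvex (semitube {x : BR m | x.1 ∈ Ω}) ∧
      ¬ Convex ℝ (semitube {x : BR m | x.1 ∈ Ω}) := by
  rw [semitube_setOf_fst_mem]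
  exact ⟨hΩcc.cConvex_fst_preimage, fun hconv => hΩnotconv hconv.of_fst_preimage⟩

/-- If `Ω ⊂ ℝ^{2n-2} ≅ ℂ^{n-1}` is a non-convex domain which is `ℂ`-convex
as a domain in `ℂ^{n-1}`, and `D = Ω × ℝ`, then the semitube `𝒮_D` is `ℂ`-convex but not
convex. -/
theorem cConvex_not_convex_semitube {m : ℕ} (hm : 1 ≤ m) (Ω : Set (Fin m → ℂ))
    (hΩopen : IsOpen Ω) (hΩconn : IsConnected Ω)
    (hΩnotconv : ¬ Convex ℝ Ω) (hΩcc : CConvex' Ω) :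
    CConvex (semitube {x : BR m | x.1 ∈ Ω}) ∧
      ¬ Convex ℝ (semitube {x : BR m | x.1 ∈ Ω}) :=
  cConvex_not_convex_semitube_general Ω hΩnotconv hΩcc
end
end

section
/- Let D := {(z_1, z_2) ∈ C² : Re z_2 > |z_1|²}. Then D belongs to A_1^2; W_D = (C × (−∞,0)) ∪ {(0,0)}; S_D = [0,∞); and for v = (v_1, v_2) with v_2 < 0, the set P_D(v) = {p ∈ (C×R) ∩ closure(D) : Re((z−p)•v) < 0 for all z ∈ D} equals the single point (−conj(v_1)/(2v_2), |v_1/(2v_2)|²), while P_D(v) = ∅ for all other v ∈ C × R. -/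
/-! For real `c < 0` and `q = supportPoint v₁ c`, completing the square gives
`Re ((z - q) • (v₁, c)) = c (‖z₁ - q₁‖² + (Re z₂ - ‖z₁‖²))`, which is negative on `D` and, on
`closure D = {‖z₁‖² ≤ Re z₂}`, vanishes only at `q`. Hence `Re (· • v)` is bounded on `D`, and
`q` is the only point of `closure D` where it reaches its supremum: `P_D(v) = {q}`.
Conversely, if `Re (· • v)` is bounded on `D`, evaluating it on `(0, 1 - t i)`, `(0, t)` and
`(t conj v₁, ‖t v₁‖² + 1)` forces `v₂` to be real and negative or `v = 0`. Every `p ∈ P_D(v)`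
bounds `Re (· • v)` on `D`, so `P_D(v)` is empty for all other `v`.
Along a real line `z + t v`, `‖z₁‖² - Re z₂` is a quadratic polynomial in `t` with leading
coefficient `‖v₁‖²`; it stays negative only if `v₁ = 0` and `Re v₂ = 0`. -/

open Complex Metric

noncomputable section

/-- The bilinear dot product on `ℂ²`. -/
def dot2 (z w : ℂ × ℂ) : ℂ := z.1 * w.1 + z.2 * w.2

/-- `D` belongs to the family `𝒜_1²`: `D ⊂ ℂ²` is a convex domain containing no complex
affine lines, invariant under translations by `{0} × iℝ`, and every real affine line
contained in `D` has direction in `{0} × iℝ`. -/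
def InA12 (D : Set (ℂ × ℂ)) : Prop :=
  IsOpen D ∧ D.Nonempty ∧ Convex ℝ D ∧
  (∀ z v : ℂ × ℂ, v ≠ 0 → ∃ t : ℂ, z + t • v ∉ D) ∧
  (∀ z ∈ D, ∀ x : ℝ, (z.1, z.2 + (x : ℂ) * Complex.I) ∈ D) ∧
  (∀ z v : ℂ × ℂ, (∀ t : ℝ, z + t • v ∈ D) → v.1 = 0 ∧ v.2.re = 0)

/-- The cone `W_D = {v : sup_{z ∈ D} Re (z • v) < ∞}`. -/
def WD (D : Set (ℂ × ℂ)) : Set (ℂ × ℂ) :=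
  {v | ∃ C : ℝ, ∀ z ∈ D, (dot2 z v).re ≤ C}

/-- The cone `S_D = {y ∈ ℝ : (0,y) • v ≤ 0 for all v ∈ W_D}`. -/
def SD (D : Set (ℂ × ℂ)) : Set ℝ :=
  {y | ∀ v ∈ WD D, (dot2 ((0 : ℂ), (y : ℂ)) v).re ≤ 0}

/-- The set `P_D(v) = {p ∈ (ℂ × ℝ) ∩ closure D : Re ((z - p) • v) < 0 for all z ∈ D}`. -/
def PD (D : Set (ℂ × ℂ)) (v : ℂ × ℂ) : Set (ℂ × ℂ) :=
  {p | p.2.im = 0 ∧ p ∈ closure D ∧ ∀ z ∈ D, (dot2 (z - p) v).re < 0}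

lemma nonpos_of_forall_pos_mul_le {a C : ℝ} (h : ∀ t : ℝ, 0 < t → t * a ≤ C) : a ≤ 0 := by
  by_contra! ha
  have := h ((|C| + 1) / a) (by positivity)
  rw [div_mul_cancel₀ _ ha.ne'] at this
  linarith [le_abs_self C]

lemma eq_zero_of_forall_mul_le {a C : ℝ} (h : ∀ t : ℝ, t * a ≤ C) : a = 0 := by
  refine le_antisymm (nonpos_of_forall_pos_mul_le fun t _ => h t) ?_
  have : -a ≤ 0 := nonpos_of_forall_pos_mul_le (C := C) fun t _ => by linarith [h (-t)]
  linarith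

lemma eq_zero_of_forall_quadratic_neg {a b c : ℝ} (ha : 0 ≤ a)
    (h : ∀ t : ℝ, a * t ^ 2 + b * t + c < 0) : a = 0 ∧ b = 0 := by
  have ha₀ : a = 0 := by
    refine le_antisymm (nonpos_of_forall_pos_mul_le (C := -c) fun s hs => ?_) ha
    have h₁ := h √s
    have h₂ := h (-√s)
    rw [neg_sq, Real.sq_sqrt hs.le] at h₂
    rw [Real.sq_sqrt hs.le] at h₁
    linarith
  subst ha₀
  exact ⟨rfl, eq_zero_of_forall_mul_le (C := -c) fun t => by linarith [h t]⟩

lemma dot2_sub (z p v : ℂ × ℂ) : dot2 (z - p) v = dot2 z v - dot2 p v := by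
  simp only [dot2, Prod.fst_sub, Prod.snd_sub]; ring

lemma re_dot2 (z v : ℂ × ℂ) :
    (dot2 z v).re = z.1.re * v.1.re - z.1.im * v.1.im + (z.2.re * v.2.re - z.2.im * v.2.im) := by
  simp [dot2]

lemma mem_WD_of_mem_PD {D : Set (ℂ × ℂ)} {v p : ℂ × ℂ} (hp : p ∈ PD D v) : v ∈ WD D :=
  ⟨(dot2 p v).re, fun z hz => by
    have := hp.2.2 z hz
    rw [dot2_sub, Complex.sub_re] at this
    linarith⟩

lemma re_dot2_sub_nonpos_of_mem_PD {D : Set (ℂ × ℂ)} {v p q : ℂ × ℂ} (hp : p ∈ PD D v)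
    (hq : q ∈ closure D) : (dot2 (q - p) v).re ≤ 0 := by
  have hcont : Continuous fun z : ℂ × ℂ => (dot2 (z - p) v).re := by unfold dot2; fun_prop
  exact closure_lt_subset_le hcont continuous_const
    (closure_mono (fun z hz => hp.2.2 z hz) hq)

def paraboloid : Set (ℂ × ℂ) := {z | ‖z.1‖ ^ 2 < z.2.re}

@[simp]
lemma mem_paraboloid {z : ℂ × ℂ} : z ∈ paraboloid ↔ ‖z.1‖ ^ 2 < z.2.re :=
  Iff.rfl

lemma isOpen_paraboloid : IsOpen paraboloid := by
  unfold paraboloid; exact isOpen_lt (by fun_prop) (by fun_prop)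

lemma closure_paraboloid : closure paraboloid = {z : ℂ × ℂ | ‖z.1‖ ^ 2 ≤ z.2.re} := by
  refine subset_antisymm (closure_lt_subset_le (by fun_prop) (by fun_prop)) fun z hz => ?_
  have hmaps : Set.MapsTo (fun ε : ℝ => (z.1, z.2 + ε)) (Set.Ioi 0) paraboloid :=
    fun ε (hε : 0 < ε) => show ‖z.1‖ ^ 2 < (z.2 + ε).re by simpa using hz.trans_lt (by simpa)
  have h₀ : (0 : ℝ) ∈ closure (Set.Ioi 0) := by rw [closure_Ioi]; exact Set.self_mem_Ici
  simpa using map_mem_closure (by fun_prop) h₀ hmaps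

lemma convex_paraboloid : Convex ℝ paraboloid := by
  have hnorm : ConvexOn ℝ Set.univ fun z : ℂ × ℂ => ‖z.1‖ ^ 2 :=
    ((convexOn_norm convex_univ).pow (fun _ _ => norm_nonneg _) 2).comp_linearMap
      (LinearMap.fst ℝ ℂ ℂ)
  have hre : ConcaveOn ℝ Set.univ fun z : ℂ × ℂ => z.2.re :=
    (Complex.reLm.comp (LinearMap.snd ℝ ℂ ℂ)).concaveOn convex_univ
  have hsub : paraboloid =
      {z ∈ Set.univ | ((fun z : ℂ × ℂ => ‖z.1‖ ^ 2) - fun z : ℂ × ℂ => z.2.re) z < 0} := by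
    ext z
    simp
  rw [hsub]
  exact (hnorm.sub hre).convex_lt 0

lemma fst_eq_zero_and_re_snd_eq_zero_of_forall_add_smul_mem_paraboloid {z v : ℂ × ℂ}
    (h : ∀ t : ℝ, z + t • v ∈ paraboloid) : v.1 = 0 ∧ v.2.re = 0 := by
  have hquad : ∀ t : ℝ, ‖v.1‖ ^ 2 * t ^ 2
      + (2 * (z.1.re * v.1.re + z.1.im * v.1.im) - v.2.re) * t + (‖z.1‖ ^ 2 - z.2.re) < 0 := by
    intro t
    have := h t
    simp only [mem_paraboloid, Complex.sq_norm, Complex.normSq_apply] at this ⊢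
    simp at this
    linarith
  obtain ⟨hnorm, hb⟩ := eq_zero_of_forall_quadratic_neg (sq_nonneg _) hquad
  have hv₁ : v.1 = 0 := by simpa using hnorm
  simp [hv₁] at hb
  exact ⟨hv₁, hb⟩

lemma eq_zero_of_forall_add_smul_mem_paraboloid {z v : ℂ × ℂ}
    (h : ∀ t : ℂ, z + t • v ∈ paraboloid) : v = 0 := by
  obtain ⟨hv₁, hv₂re⟩ := fst_eq_zero_and_re_snd_eq_zero_of_forall_add_smul_mem_paraboloid fun t => by
    simpa [Complex.coe_smul] using h t
  obtain ⟨-, hv₂im⟩ := fst_eq_zero_and_re_snd_eq_zero_of_forall_add_smul_mem_paraboloid (v := Complex.I • v) fun t => by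
    rw [← Complex.coe_smul, smul_smul]
    exact h _
  simp at hv₂im
  exact Prod.ext hv₁ (Complex.ext hv₂re hv₂im)

lemma inA12_paraboloid : InA12 paraboloid := by
  refine ⟨isOpen_paraboloid, ⟨(0, 1), by simp⟩, convex_paraboloid,
    fun z v hv => ?_, fun z hz x => by simpa using hz,
    fun z v h => fst_eq_zero_and_re_snd_eq_zero_of_forall_add_smul_mem_paraboloid h⟩
  by_contra! h
  exact hv (eq_zero_of_forall_add_smul_mem_paraboloid h)

def supportPoint (v₁ : ℂ) (c : ℝ) : ℂ × ℂ :=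
  (-(starRingEnd ℂ) v₁ / (2 * (c : ℂ)), ((‖v₁ / (2 * (c : ℂ))‖ ^ 2 : ℝ) : ℂ))

lemma re_snd_supportPoint (v₁ : ℂ) (c : ℝ) :
    (supportPoint v₁ c).2.re = ‖(supportPoint v₁ c).1‖ ^ 2 := by
  simp only [supportPoint, Complex.ofReal_re, norm_div, norm_neg, Complex.norm_conj]

lemma im_snd_supportPoint (v₁ : ℂ) (c : ℝ) : (supportPoint v₁ c).2.im = 0 :=
  Complex.ofReal_im _

lemma supportPoint_mem_closure_paraboloid (v₁ : ℂ) (c : ℝ) :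
    supportPoint v₁ c ∈ closure paraboloid :=
  closure_paraboloid.ge (re_snd_supportPoint v₁ c).ge

lemma re_dot2_sub_supportPoint (z : ℂ × ℂ) (v₁ : ℂ) {c : ℝ} (hc : c ≠ 0) :
    (dot2 (z - supportPoint v₁ c) (v₁, c)).re =
      c * (‖z.1 - (supportPoint v₁ c).1‖ ^ 2 + (z.2.re - ‖z.1‖ ^ 2)) := by
  simp only [supportPoint]
  rw [show 2 * (c : ℂ) = ((2 * c : ℝ) : ℂ) by push_cast; rfl]
  simp only [re_dot2, Complex.sq_norm, Complex.normSq_apply, Prod.fst_sub,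
    Prod.snd_sub, Complex.sub_re, Complex.sub_im, Complex.neg_re, Complex.neg_im,
    Complex.div_ofReal_re, Complex.div_ofReal_im, Complex.conj_re, Complex.conj_im,
    Complex.ofReal_re, Complex.ofReal_im]
  field_simp
  ring

lemma re_dot2_sub_supportPoint_neg {z : ℂ × ℂ} (hz : z ∈ paraboloid) (v₁ : ℂ) {c : ℝ}
    (hc : c < 0) : (dot2 (z - supportPoint v₁ c) (v₁, c)).re < 0 := by
  rw [re_dot2_sub_supportPoint z v₁ hc.ne]
  exact mul_neg_of_neg_of_pos hc (add_pos_of_nonneg_of_pos (sq_nonneg _) (sub_pos.2 hz))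

lemma im_snd_eq_zero_of_mem_WD_paraboloid {v : ℂ × ℂ} (hv : v ∈ WD paraboloid) : v.2.im = 0 := by
  obtain ⟨C, hC⟩ := hv
  refine eq_zero_of_forall_mul_le (C := C - v.2.re) fun t => ?_
  have := hC (0, 1 - t * Complex.I) (by simp)
  simp [re_dot2] at this
  linarith

lemma re_snd_nonpos_of_mem_WD_paraboloid {v : ℂ × ℂ} (hv : v ∈ WD paraboloid) : v.2.re ≤ 0 := by
  obtain ⟨C, hC⟩ := hv
  refine nonpos_of_forall_pos_mul_le (C := C) fun t ht => ?_
  simpa [re_dot2] using hC (0, t) (by simpa using ht)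

lemma fst_eq_zero_of_mem_WD_paraboloid {v : ℂ × ℂ} (hv : v ∈ WD paraboloid)
    (hv₂ : v.2 = 0) : v.1 = 0 := by
  obtain ⟨C, hC⟩ := hv
  suffices Complex.normSq v.1 = 0 from Complex.normSq_eq_zero.1 this
  refine eq_zero_of_forall_mul_le (C := C) fun t => ?_
  set w := t * (starRingEnd ℂ) v.1
  have := hC (w, Complex.ofReal (‖w‖ ^ 2 + 1))
    (by rw [mem_paraboloid, Complex.ofReal_re]; linarith)
  simp [re_dot2, hv₂, w, Complex.normSq_apply] at this ⊢
  linarith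

lemma WD_paraboloid : WD paraboloid = {v : ℂ × ℂ | v.2.im = 0 ∧ v.2.re < 0} ∪ {0} := by
  ext v
  constructor
  · intro hv
    have him := im_snd_eq_zero_of_mem_WD_paraboloid hv
    rcases (re_snd_nonpos_of_mem_WD_paraboloid hv).lt_or_eq with hlt | hre
    · exact Or.inl ⟨him, hlt⟩
    · have hv₂ : v.2 = 0 := Complex.ext hre him
      exact Or.inr (Prod.ext (fst_eq_zero_of_mem_WD_paraboloid hv hv₂) hv₂)
  · rintro (⟨him, hlt⟩ | rfl)
    · obtain ⟨v₁, c, rfl⟩ : ∃ (v₁ : ℂ) (c : ℝ), v = (v₁, (c : ℂ)) :=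
        ⟨v.1, v.2.re, Prod.ext rfl (Complex.ext rfl (by simp [him]))⟩
      refine ⟨(dot2 (supportPoint v₁ c) (v₁, c)).re, fun z hz => ?_⟩
      have := re_dot2_sub_supportPoint_neg hz v₁ (c := c) (by simpa using hlt)
      rw [dot2_sub, Complex.sub_re] at this
      linarith
    · exact ⟨0, fun z _ => by simp [dot2]⟩

lemma SD_paraboloid : SD paraboloid = Set.Ici 0 := by
  ext y
  simp only [SD, WD_paraboloid, Set.mem_Ici]
  constructor
  · intro h
    have := h (0, -1) (Or.inl ⟨by simp, by simp⟩)
    simpa [re_dot2] using this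
  · rintro hy v (⟨him, hlt⟩ | rfl)
    · simpa [re_dot2, him] using mul_nonpos_of_nonneg_of_nonpos hy hlt.le
    · simp [dot2]

lemma PD_paraboloid_of_neg (v₁ : ℂ) {c : ℝ} (hc : c < 0) :
    PD paraboloid (v₁, c) = {supportPoint v₁ c} := by
  ext p
  constructor
  · intro hp
    set q := supportPoint v₁ c
    have hp₂ : ‖p.1‖ ^ 2 ≤ p.2.re := closure_paraboloid.le hp.2.1
    have hqp := re_dot2_sub_nonpos_of_mem_PD hp (supportPoint_mem_closure_paraboloid v₁ c)
    have hpq : (dot2 (p - q) (v₁, c)).re = -(dot2 (q - p) (v₁, c)).re := by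
      simp only [dot2_sub, Complex.sub_re]; ring
    rw [re_dot2_sub_supportPoint p v₁ hc.ne] at hpq
    have hsum : ‖p.1 - q.1‖ ^ 2 + (p.2.re - ‖p.1‖ ^ 2) ≤ 0 :=
      nonpos_of_mul_nonneg_right (by linarith) hc
    have h₁ : p.1 = q.1 := by
      have : ‖p.1 - q.1‖ ^ 2 = 0 := by linarith [sq_nonneg ‖p.1 - q.1‖]
      simpa [sub_eq_zero] using this
    have h₂ : p.2.re = q.2.re := by
      rw [re_snd_supportPoint, ← h₁]
      linarith [sq_nonneg ‖p.1 - q.1‖]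
    exact Prod.ext h₁ (Complex.ext h₂ (by rw [hp.1, im_snd_supportPoint]))
  · rintro rfl
    exact ⟨im_snd_supportPoint v₁ c, supportPoint_mem_closure_paraboloid v₁ c,
      fun z hz => re_dot2_sub_supportPoint_neg hz v₁ hc⟩

lemma PD_paraboloid_eq_empty {v : ℂ × ℂ} (hv : ¬ v.2.re < 0) : PD paraboloid v = ∅ := by
  refine Set.eq_empty_of_forall_notMem fun p hp => ?_
  rcases WD_paraboloid ▸ mem_WD_of_mem_PD hp with ⟨-, hlt⟩ | rfl
  · exact hv hlt
  · simpa [dot2] using hp.2.2 (0, 1) (by simp)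

/-- For the paraboloid `D = {(z₁,z₂) : Re z₂ > |z₁|²}` one has `D ∈ 𝒜_1²`,
`W_D = (ℂ × (-∞,0)) ∪ {0}`, `S_D = [0,∞)`, and `P_D(v₁,v₂) = {(-conj(v₁)/(2v₂), |v₁/(2v₂)|²)}`
when `v₂ < 0` is real, while `P_D(v) = ∅` for all other `v ∈ ℂ × ℝ`. -/
theorem example_paraboloid :
    let D : Set (ℂ × ℂ) := {z | ‖z.1‖ ^ 2 < z.2.re}
    InA12 D ∧
    WD D = {v : ℂ × ℂ | v.2.im = 0 ∧ v.2.re < 0} ∪ {0} ∧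
    SD D = Set.Ici (0 : ℝ) ∧
    (∀ v₁ : ℂ, ∀ c : ℝ, c < 0 →
      PD D (v₁, (c : ℂ)) =
        {(-(starRingEnd ℂ) v₁ / (2 * (c : ℂ)),
          ((‖v₁ / (2 * (c : ℂ))‖ ^ 2 : ℝ) : ℂ))}) ∧
    (∀ v : ℂ × ℂ, v.2.im = 0 → ¬ v.2.re < 0 → PD D v = ∅) :=
  ⟨inA12_paraboloid, WD_paraboloid, SD_paraboloid, fun v₁ _ hc => PD_paraboloid_of_neg v₁ hc,
    fun _ _ hv => PD_paraboloid_eq_empty hv⟩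
end
end
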